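/- For every PL-formula α, the DELKh-formula α ↔ ◇Kh α is valid, where ◇ abbreviates ¬□¬ (a propositional formula is true exactly when some informational update leads to knowing how to resolve it). -/

import Mathlib

/-- Formulas of the propositional language `PL` over atoms `P`. -/
inductive PLForm (P : Type) : Type
  | atom : P → PLForm P
  | bot  : PLForm P
  | and  : PLForm P → PLForm P → PLForm P
  | or   : PLForm P → PLForm P → PLForm P
  | imp  : PLForm P → PLForm P → PLForm P

/-- `¬α` abbreviates `α → ⊥`. -/
def PLForm.neg {P : Type} (α : PLForm P) : PLForm P := α.imp .bot

/-- The resolution space `S(α)`, realized as a type: `S(p)` and `S(⊥)` are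
singletons, `S(α∨β)` is the disjoint union, `S(α∧β)` the product, and
`S(α→β)` the full function space. -/
def RS (P : Type) : PLForm P → Type
  | .atom _  => Unit
  | .bot     => Unit
  | .or a b  => RS P a ⊕ RS P b
  | .and a b => RS P a × RS P b
  | .imp a b => RS P a → RS P b

/-- An epistemic (information) model over atoms `P` with worlds `W`:
`W` is nonempty and `V` a valuation. -/
structure Model (P W : Type) where
  ne : Nonempty W
  V : W → Set P

/-- The actual resolutions `R(w,α) ⊆ S(α)` at a world `w`. -/
def Res {P W : Type} (M : Model P W) (w : W) : (α : PLForm P) → Set (RS P α)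
  | .atom p  => {_u : Unit | p ∈ M.V w}
  | .bot     => ∅
  | .or a b  => (Sum.inl '' Res M w a) ∪ (Sum.inr '' Res M w b)
  | .and a b => (Res M w a) ×ˢ (Res M w b)
  | .imp a b => {f : RS P a → RS P b | f '' Res M w a ⊆ Res M w b}

/-- Formulas of the dynamic epistemic language `DELKh`. -/
inductive DForm (P : Type) : Type
  | atom : P → DForm P
  | bot  : DForm P
  | and  : DForm P → DForm P → DForm P
  | or   : DForm P → DForm P → DForm P
  | imp  : DForm P → DForm P → DForm P
  | K    : DForm P → DForm P
  | box  : DForm P → DForm P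
  | kh   : PLForm P → DForm P

def DForm.neg {P : Type} (φ : DForm P) : DForm P := φ.imp .bot
def DForm.dia {P : Type} (φ : DForm P) : DForm P := (DForm.box φ.neg).neg
def DForm.biImp {P : Type} (φ ψ : DForm P) : DForm P := (φ.imp ψ).and (ψ.imp φ)

/-- Embedding of `PL` into `DELKh`. -/
def PLForm.toD {P : Type} : PLForm P → DForm P
  | .atom p  => .atom p
  | .bot     => .bot
  | .and a b => (toD a).and (toD b)
  | .or a b  => (toD a).or (toD b)
  | .imp a b => (toD a).imp (toD b)

/-- The submodel of `M` determined by a nonempty set `s` of worlds,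
with the restricted valuation. -/
def Model.restrict {P W : Type} (M : Model P W) (s : Set W) (h : s.Nonempty) :
    Model P s :=
  { ne := ⟨⟨h.choose, h.choose_spec⟩⟩, V := fun w => M.V w.1 }

/-- Satisfaction of `DELKh`-formulas at a pointed model `(M,w)`. -/
def Sat (P : Type) : (W : Type) → Model P W → W → DForm P → Prop
  | _, M, w, .atom p  => p ∈ M.V w
  | _, _, _, .bot     => False
  | W, M, w, .and a b => Sat P W M w a ∧ Sat P W M w b
  | W, M, w, .or a b  => Sat P W M w a ∨ Sat P W M w b
  | W, M, w, .imp a b => Sat P W M w a → Sat P W M w b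
  | W, M, _, .K φ     => ∀ v : W, Sat P W M v φ
  | W, M, w, .box φ   =>
      ∀ (s : Set W) (h : w ∈ s), Sat P s (M.restrict s ⟨w, h⟩) ⟨w, h⟩ φ
  | W, M, _, .kh α    => ∃ x : RS P α, ∀ v : W, x ∈ Res M v α

/-- A `DELKh`-formula is valid if it holds at every pointed model. -/
def Valid {P : Type} (φ : DForm P) : Prop :=
  ∀ (W : Type) (M : Model P W) (w : W), Sat P W M w φ

/-- Semantic entailment from a set of `DELKh`-formulas. -/
def EntailsSet {P : Type} (Γ : Set (DForm P)) (φ : DForm P) : Prop :=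
  ∀ (W : Type) (M : Model P W) (w : W),
    (∀ ψ ∈ Γ, Sat P W M w ψ) → Sat P W M w φ

/-- Classical satisfaction of `PL`-formulas at a pointed model. -/
def PLSat {P W : Type} (M : Model P W) (w : W) : PLForm P → Prop
  | .atom p  => p ∈ M.V w
  | .bot     => False
  | .and a b => PLSat M w a ∧ PLSat M w b
  | .or a b  => PLSat M w a ∨ PLSat M w b
  | .imp a b => PLSat M w a → PLSat M w b

/-- Inquisitive support of `PL`-formulas at a state `s` of a model `M`. -/
def Support (P W : Type) (M : Model P W) : Set W → PLForm P → Prop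
  | s, .atom p  => ∀ w ∈ s, p ∈ M.V w
  | s, .bot     => s = ∅
  | s, .and a b => Support P W M s a ∧ Support P W M s b
  | s, .or a b  => Support P W M s a ∨ Support P W M s b
  | s, .imp a b => ∀ t ⊆ s, Support P W M t a → Support P W M t b

/-!
A formula is true at `w` exactly when it has a resolution at `w`. Given such a resolution `x`,
the update to the submodel `{w}` makes `x` a resolution at every remaining world, so `Kh α`
holds there. Conversely, a uniform resolution in any submodel containing `w` is in particular
a resolution at `w`, because resolutions only depend on the valuation of the world.
-/

instance RS.nonempty {P : Type} : (α : PLForm P) → Nonempty (RS P α)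
  | .atom _  => ⟨()⟩
  | .bot     => ⟨()⟩
  | .or a _  => (RS.nonempty a).elim fun x => ⟨Sum.inl x⟩
  | .and a b => (RS.nonempty a).elim fun x => (RS.nonempty b).elim fun y => ⟨(x, y)⟩
  | .imp _ b => (RS.nonempty b).elim fun y => ⟨fun _ => y⟩

theorem res_restrict {P W : Type} (M : Model P W) (s : Set W) (h : s.Nonempty) (v : s) :
    ∀ α : PLForm P, Res (M.restrict s h) v α = Res M v.1 α
  | .atom _  => rfl
  | .bot     => rfl
  | .or a b  => by simp only [Res, res_restrict M s h v a, res_restrict M s h v b]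
  | .and a b => by simp only [Res, res_restrict M s h v a, res_restrict M s h v b]; rfl
  | .imp a b => by simp only [Res, res_restrict M s h v a, res_restrict M s h v b]

theorem plSat_iff_res_nonempty {P W : Type} (M : Model P W) (w : W) :
    ∀ α : PLForm P, PLSat M w α ↔ (Res M w α).Nonempty
  | .atom _  => ⟨fun h => ⟨(), h⟩, fun ⟨_, h⟩ => h⟩
  | .bot     => by simp [PLSat, Res]
  | .or a b  => by
      simp only [PLSat, Res, plSat_iff_res_nonempty M w a, plSat_iff_res_nonempty M w b,
        Set.union_nonempty]
      exact (or_congr Set.image_nonempty Set.image_nonempty).symm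
  | .and a b => by
      simp only [PLSat, Res, plSat_iff_res_nonempty M w a, plSat_iff_res_nonempty M w b]
      exact Set.prod_nonempty_iff.symm
  | .imp a b => by
      simp only [PLSat, plSat_iff_res_nonempty M w a, plSat_iff_res_nonempty M w b]
      constructor
      · intro h
        by_cases ha : (Res M w a).Nonempty
        · obtain ⟨y, hy⟩ := h ha
          exact ⟨fun _ => y, by rintro _ ⟨_, _, rfl⟩; exact hy⟩
        · -- with no resolution of `a` at `w`, every function is a resolution of `a → b`
          obtain ⟨f⟩ := RS.nonempty (.imp a b)
          exact ⟨f, by rintro _ ⟨x, hx, rfl⟩; exact absurd ⟨x, hx⟩ ha⟩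
      · rintro ⟨f, hf⟩ ⟨x, hx⟩
        exact ⟨f x, hf ⟨x, hx, rfl⟩⟩

theorem sat_toD_iff {P W : Type} (M : Model P W) (w : W) :
    ∀ α : PLForm P, Sat P W M w α.toD ↔ PLSat M w α
  | .atom _  => Iff.rfl
  | .bot     => Iff.rfl
  | .or a b  => by simp only [PLForm.toD, Sat, PLSat, sat_toD_iff M w a, sat_toD_iff M w b]
  | .and a b => by simp only [PLForm.toD, Sat, PLSat, sat_toD_iff M w a, sat_toD_iff M w b]
  | .imp a b => by simp only [PLForm.toD, Sat, PLSat, sat_toD_iff M w a, sat_toD_iff M w b]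

theorem sat_biImp_iff {P W : Type} (M : Model P W) (w : W) (φ ψ : DForm P) :
    Sat P W M w (φ.biImp ψ) ↔ (Sat P W M w φ ↔ Sat P W M w ψ) := by
  simp only [DForm.biImp, Sat, iff_def]

theorem sat_dia_iff {P W : Type} (M : Model P W) (w : W) (φ : DForm P) :
    Sat P W M w φ.dia ↔
      ∃ (s : Set W) (h : w ∈ s), Sat P s (M.restrict s ⟨w, h⟩) ⟨w, h⟩ φ := by
  simp only [DForm.dia, DForm.neg, Sat, imp_false, not_forall, not_not]

theorem sat_kh_restrict_iff {P W : Type} (M : Model P W) (s : Set W) (h : s.Nonempty)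
    (v : s) (α : PLForm P) :
    Sat P s (M.restrict s h) v (.kh α) ↔ ∃ x : RS P α, ∀ u ∈ s, x ∈ Res M u α := by
  simp only [Sat, res_restrict, Subtype.forall]

theorem sat_dia_kh_iff {P W : Type} (M : Model P W) (w : W) (α : PLForm P) :
    Sat P W M w (DForm.dia (.kh α)) ↔ ∃ s : Set W, w ∈ s ∧ ∃ x : RS P α, ∀ u ∈ s, x ∈ Res M u α :=
  (sat_dia_iff M w _).trans <| exists_congr fun s =>
    ⟨fun ⟨h, hkh⟩ => ⟨h, (sat_kh_restrict_iff M s _ _ α).1 hkh⟩,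
      fun ⟨h, hkh⟩ => ⟨h, (sat_kh_restrict_iff M s _ _ α).2 hkh⟩⟩

theorem truth_iff_dia_kh_general {P : Type} (α : PLForm P) :
    Valid (α.toD.biImp (DForm.dia (.kh α))) := by
  intro W M w
  rw [sat_biImp_iff, sat_toD_iff, plSat_iff_res_nonempty, sat_dia_kh_iff]
  constructor
  · rintro ⟨x, hx⟩
    exact ⟨{w}, rfl, x, fun u hu => hu ▸ hx⟩
  · rintro ⟨s, hs, x, hx⟩
    exact ⟨x, hx w hs⟩

/-- `α ↔ ◇Kh α` is valid, where `◇ = ¬□¬`. -/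
theorem truth_iff_dia_kh {P : Type} [Countable P] (α : PLForm P) :
    Valid (α.toD.biImp (DForm.dia (.kh α))) :=
  truth_iff_dia_kh_general α
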